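/- Let G be connected, p, q > 1, and λ_{1,q} := inf{p φ_{G,p,q}(x)/‖x‖^p : x ∈ ℝ^N_0, x ≠ 0} with ℝ^N_0 = {x : Σ_i x_i = 0}. Then the infimum is attained at some ζ ∈ ℝ^N_0 \ {0}, and ζ attains the infimum if and only if λ_{1,q} ‖ζ‖^{p-2} ζ = Dφ_{G,p,q}(ζ). -/

import Mathlib

open Finset Real Filter
open scoped RealInnerProductSpace

/-- generalized edge gradient: `f_{e,q}(x) = (Σ_{i<j, i,j∈e} |x_i - x_j|^q)^{1/q}` -/
noncomputable def feq {N : ℕ} (q : ℝ) (e : Finset (Fin N)) (x : EuclideanSpace ℝ (Fin N)) : ℝ :=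
  (∑ p ∈ (e ×ˢ e).filter (fun p => p.1 < p.2), |x p.1 - x p.2| ^ q) ^ (1/q)

/-- `f_e(x) = max_{i,j ∈ e} |x_i - x_j|` -/
noncomputable def femax {N : ℕ} (e : Finset (Fin N)) (x : EuclideanSpace ℝ (Fin N)) : ℝ :=
  ⨆ p ∈ (e ×ˢ e : Finset (Fin N × Fin N)), |x p.1 - x p.2|

/-- `φ_{G,p,q}(x) = (1/p) Σ_{e∈E} w(e) f_{e,q}(x)^p` -/
noncomputable def phiq {N : ℕ} (E : Finset (Finset (Fin N))) (w : Finset (Fin N) → ℝ)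
    (p q : ℝ) (x : EuclideanSpace ℝ (Fin N)) : ℝ :=
  (1/p) * ∑ e ∈ E, w e * feq q e x ^ p

/-- `φ_{G,p}(x) = (1/p) Σ_{e∈E} w(e) f_e(x)^p` -/
noncomputable def phim {N : ℕ} (E : Finset (Finset (Fin N))) (w : Finset (Fin N) → ℝ)
    (p : ℝ) (x : EuclideanSpace ℝ (Fin N)) : ℝ :=
  (1/p) * ∑ e ∈ E, w e * femax e x ^ p

/-- `ν_E = max_{e∈E} #e(#e-1)/2` -/
def nuE {N : ℕ} (E : Finset (Finset (Fin N))) : ℕ :=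
  E.sup fun e => e.card * (e.card - 1) / 2

/-- `i` and `j` are joined by a chain of `k` hyperedges of `E`. -/
def chained {N : ℕ} (E : Finset (Finset (Fin N))) (i j : Fin N) (k : ℕ) : Prop :=
  ∃ μ : ℕ → Fin N, μ 0 = i ∧ μ k = j ∧ ∀ l < k, ∃ e ∈ E, μ l ∈ e ∧ μ (l + 1) ∈ e

/-- hypergraph distance: minimal chain length -/
noncomputable def hdist {N : ℕ} (E : Finset (Finset (Fin N))) (i j : Fin N) : ℕ :=
  sInf {k | chained E i j k}

/-- hypergraph diameter -/
noncomputable def hdiam {N : ℕ} (E : Finset (Finset (Fin N))) : ℕ :=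
  Finset.univ.sup fun i => Finset.univ.sup fun j => hdist E i j

/-- mean-value vector `x̄` -/
noncomputable def meanVec {N : ℕ} (z : EuclideanSpace ℝ (Fin N)) : EuclideanSpace ℝ (Fin N) :=
  WithLp.toLp 2 (fun _ => (∑ i, z i) / N)

open Topology

lemma myLittleO {E : Type*} [NormedAddCommGroup E] [NormedSpace ℝ E] {f : E → ℝ} {x : E}
    {C p : ℝ} (hp : 1 < p) (hb : ∀ y, |f y| ≤ C * ‖y - x‖ ^ p) : HasFDerivAt f (0 : E →L[ℝ] ℝ) x := by
  rw [hasFDerivAt_iff_isLittleO_nhds_zero]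
  have hfx : f x = 0 := by
    have := hb x
    simp [Real.zero_rpow (by positivity : p ≠ 0)] at this
    exact this
  have htend : Tendsto (fun h : E => C * ‖h‖ ^ (p - 1)) (𝓝 0) (𝓝 0) := by
    have h1 : Tendsto (fun h : E => ‖h‖) (𝓝 0) (𝓝 0) := by
      simpa using tendsto_norm_zero
    have h2 : ContinuousAt (fun t : ℝ => t ^ (p - 1)) 0 :=
      Real.continuousAt_rpow_const 0 (p - 1) (Or.inr (by linarith))
    have := (h2.tendsto.comp h1).const_mul C
    simpa [Real.zero_rpow (by linarith : p - 1 ≠ 0)] using this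
  rw [Asymptotics.isLittleO_iff]
  intro c hc
  filter_upwards [htend.eventually (gt_mem_nhds hc)] with h hh
  simp only [ContinuousLinearMap.zero_apply, sub_zero, hfx]
  rcases eq_or_ne h 0 with rfl | hne
  · simp [hfx]
  · have h1 : |f (x + h)| ≤ C * ‖h‖ ^ p := by simpa using hb (x + h)
    have h2 : C * ‖h‖ ^ p = (C * ‖h‖ ^ (p - 1)) * ‖h‖ := by
      rw [mul_assoc, ← Real.rpow_add_one (norm_ne_zero_iff.2 hne)]
      ring_nf
    calc ‖f (x + h)‖ = |f (x + h)| := rfl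
      _ ≤ (C * ‖h‖ ^ (p - 1)) * ‖h‖ := by rw [← h2]; exact h1
      _ ≤ c * ‖h‖ := by
          apply mul_le_mul_of_nonneg_right (le_of_lt hh) (norm_nonneg _)

lemma diffAbsRpow {q : ℝ} (hq : 1 < q) : Differentiable ℝ (fun t : ℝ => |t| ^ q) := by
  intro t
  rcases eq_or_ne t 0 with rfl | ht
  · exact (myLittleO (C := 1) hq (fun y => by
      simp [abs_of_nonneg (Real.rpow_nonneg (abs_nonneg y) q), Real.abs_rpow_of_nonneg (abs_nonneg y)])).differentiableAt
  · exact (differentiableAt_abs ht).rpow_const (Or.inl (abs_ne_zero.2 ht))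

noncomputable def Sfun {N : ℕ} (q : ℝ) (e : Finset (Fin N)) (x : EuclideanSpace ℝ (Fin N)) : ℝ :=
  ∑ p ∈ (e ×ˢ e).filter (fun p => p.1 < p.2), |x p.1 - x p.2| ^ q

lemma Sfun_nonneg {N : ℕ} (q : ℝ) (e : Finset (Fin N)) (x : EuclideanSpace ℝ (Fin N)) :
    0 ≤ Sfun q e x :=
  Finset.sum_nonneg fun _ _ => Real.rpow_nonneg (abs_nonneg _) q

lemma feq_nonneg {N : ℕ} (q : ℝ) (e : Finset (Fin N)) (x : EuclideanSpace ℝ (Fin N)) :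
    0 ≤ feq q e x := Real.rpow_nonneg (Sfun_nonneg q e x) _

lemma feq_rpow {N : ℕ} {q : ℝ} (hq : 0 < q) (p : ℝ) (e : Finset (Fin N))
    (x : EuclideanSpace ℝ (Fin N)) : feq q e x ^ p = Sfun q e x ^ (p / q) := by
  show (Sfun q e x ^ (1/q)) ^ p = _
  rw [← Real.rpow_mul (Sfun_nonneg q e x)]
  congr 1
  field_simp

lemma coordLe {N : ℕ} (z : EuclideanSpace ℝ (Fin N)) (i : Fin N) : |z i| ≤ ‖z‖ := by
  rw [EuclideanSpace.norm_eq, ← Real.sqrt_sq (abs_nonneg (z i))]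
  apply Real.sqrt_le_sqrt
  rw [sq_abs]
  have := Finset.single_le_sum (f := fun j => ‖z j‖ ^ 2) (fun j _ => by positivity)
    (Finset.mem_univ i)
  simpa [Real.norm_eq_abs, sq_abs] using this

lemma diffS {N : ℕ} {q : ℝ} (hq : 1 < q) (e : Finset (Fin N)) :
    Differentiable ℝ (Sfun (N := N) q e) := by
  apply Differentiable.fun_sum
  intro pr _
  exact (diffAbsRpow hq).comp
    (((EuclideanSpace.proj pr.1 : EuclideanSpace ℝ (Fin N) →L[ℝ] ℝ).differentiable).sub
      ((EuclideanSpace.proj pr.2 : EuclideanSpace ℝ (Fin N) →L[ℝ] ℝ).differentiable))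

lemma gdiff {N : ℕ} {p q : ℝ} (hp : 1 < p) (hq : 1 < q) (e : Finset (Fin N)) :
    Differentiable ℝ (fun x : EuclideanSpace ℝ (Fin N) => Sfun q e x ^ (p / q)) := by
  intro x
  rcases eq_or_ne (Sfun q e x) 0 with h0 | h0
  · -- derivative zero via bound
    set n : ℝ := (((e ×ˢ e).filter (fun pr => pr.1 < pr.2)).card : ℝ) with hn
    have hq0 : (0:ℝ) < q := by linarith
    have key : ∀ pr ∈ (e ×ˢ e).filter (fun pr => pr.1 < pr.2), x pr.1 = x pr.2 := by
      intro pr hpr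
      have h1 := (Finset.sum_eq_zero_iff_of_nonneg
        (fun i _ => Real.rpow_nonneg (abs_nonneg _) q)).1 h0 pr hpr
      have := (Real.rpow_eq_zero (abs_nonneg _) (by linarith)).1 h1
      have := abs_eq_zero.1 this
      linarith [sub_eq_zero.1 this]
    have hb : ∀ y : EuclideanSpace ℝ (Fin N),
        |Sfun q e y ^ (p / q)| ≤ (n ^ (p/q) * 2 ^ p) * ‖y - x‖ ^ p := by
      intro y
      set r : ℝ := ‖y - x‖ with hr
      have hr0 : 0 ≤ r := norm_nonneg _
      have hSb : Sfun q e y ≤ n * (2 * r) ^ q := by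
        have : ∀ pr ∈ (e ×ˢ e).filter (fun pr => pr.1 < pr.2),
            |y pr.1 - y pr.2| ^ q ≤ (2 * r) ^ q := by
          intro pr hpr
          apply Real.rpow_le_rpow (abs_nonneg _) _ (le_of_lt hq0)
          have hxy : y pr.1 - y pr.2 = (y - x) pr.1 - (y - x) pr.2 := by
            have := key pr hpr
            simp [PiLp.sub_apply, this]
          rw [hxy]
          calc |(y - x) pr.1 - (y - x) pr.2| ≤ |(y - x) pr.1| + |(y - x) pr.2| :=
                abs_sub _ _
            _ ≤ r + r := add_le_add (coordLe _ _) (coordLe _ _)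
            _ = 2 * r := by ring
        calc Sfun q e y ≤ ((e ×ˢ e).filter (fun pr => pr.1 < pr.2)).card • ((2*r) ^ q) :=
              Finset.sum_le_card_nsmul _ _ _ this
          _ = n * (2 * r) ^ q := by rw [nsmul_eq_mul]
      have hpq0 : (0:ℝ) ≤ p / q := by positivity
      have h1 : Sfun q e y ^ (p/q) ≤ (n * (2*r) ^ q) ^ (p/q) :=
        Real.rpow_le_rpow (Sfun_nonneg q e y) hSb hpq0
      have h2 : (n * (2*r) ^ q) ^ (p/q) = n ^ (p/q) * 2 ^ p * r ^ p := by
        have hqne : q ≠ 0 := by linarith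
        rw [Real.mul_rpow (by positivity) (by positivity),
          ← Real.rpow_mul (by positivity : (0:ℝ) ≤ 2*r),
          (by field_simp : q * (p/q) = p),
          Real.mul_rpow (by norm_num) hr0, mul_assoc]
      rw [abs_of_nonneg (Real.rpow_nonneg (Sfun_nonneg q e y) _)]
      rw [h2] at h1
      exact h1
    exact (myLittleO hp hb).differentiableAt
  · exact ((diffS hq e) x).rpow_const (Or.inl h0)


lemma phiq_eq' {N : ℕ} (E : Finset (Finset (Fin N))) (w : Finset (Fin N) → ℝ) {p q : ℝ}
    (hq : 0 < q) :
    phiq E w p q = fun x => (1/p) * ∑ e ∈ E, w e * Sfun q e x ^ (p/q) := by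
  funext x
  unfold phiq
  congr 1
  exact Finset.sum_congr rfl fun e _ => by rw [feq_rpow hq]

lemma diffPhi {N : ℕ} (E : Finset (Finset (Fin N))) (w : Finset (Fin N) → ℝ) {p q : ℝ}
    (hp : 1 < p) (hq : 1 < q) : Differentiable ℝ (phiq E w p q) := by
  rw [phiq_eq' E w (by linarith : (0:ℝ) < q)]
  apply Differentiable.const_mul
  apply Differentiable.fun_sum
  intro e _
  exact (gdiff hp hq e).const_mul _

lemma phiq_nonneg {N : ℕ} {E : Finset (Finset (Fin N))} {w : Finset (Fin N) → ℝ}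
    (hw : ∀ e ∈ E, 0 < w e) {p : ℝ} (hp : 0 < p) (q : ℝ) (x : EuclideanSpace ℝ (Fin N)) :
    0 ≤ phiq E w p q x := by
  unfold phiq
  apply mul_nonneg (by positivity)
  exact Finset.sum_nonneg fun e he => mul_nonneg (hw e he).le
    (Real.rpow_nonneg (feq_nonneg q e x) p)

lemma feq_smul {N : ℕ} {q : ℝ} (hq : 0 < q) (e : Finset (Fin N)) {c : ℝ} (hc : 0 ≤ c)
    (x : EuclideanSpace ℝ (Fin N)) : feq q e (c • x) = c * feq q e x := by
  have hS : Sfun q e (c • x) = c ^ q * Sfun q e x := by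
    unfold Sfun
    rw [Finset.mul_sum]
    apply Finset.sum_congr rfl
    intro pr _
    have h1 : (c • x) pr.1 - (c • x) pr.2 = c * (x pr.1 - x pr.2) := by
      simp [PiLp.smul_apply, smul_eq_mul]
      ring
    rw [h1, abs_mul, abs_of_nonneg hc, Real.mul_rpow hc (abs_nonneg _)]
  show Sfun q e (c • x) ^ (1/q) = c * Sfun q e x ^ (1/q)
  rw [hS, Real.mul_rpow (by positivity) (Sfun_nonneg q e x), ← Real.rpow_mul hc,
    mul_one_div_cancel hq.ne', Real.rpow_one]

lemma phiq_smul {N : ℕ} (E : Finset (Finset (Fin N))) (w : Finset (Fin N) → ℝ) {p q : ℝ}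
    (hp : 0 < p) (hq : 0 < q) {c : ℝ} (hc : 0 ≤ c) (x : EuclideanSpace ℝ (Fin N)) :
    phiq E w p q (c • x) = c ^ p * phiq E w p q x := by
  unfold phiq
  have h : ∀ e ∈ E, w e * feq q e (c • x) ^ p = c ^ p * (w e * feq q e x ^ p) := by
    intro e _
    rw [feq_smul hq e hc, Real.mul_rpow hc (feq_nonneg q e x)]
    ring
  rw [Finset.sum_congr rfl h, ← Finset.mul_sum]
  ring

noncomputable def onesV (N : ℕ) : EuclideanSpace ℝ (Fin N) := WithLp.toLp 2 (fun _ => 1)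

lemma phiq_translate {N : ℕ} (E : Finset (Finset (Fin N))) (w : Finset (Fin N) → ℝ)
    (p q : ℝ) (x : EuclideanSpace ℝ (Fin N)) (c : ℝ) :
    phiq E w p q (x + c • onesV N) = phiq E w p q x := by
  have hfe : ∀ e : Finset (Fin N), feq q e (x + c • onesV N) = feq q e x := by
    intro e
    unfold feq
    congr 1
    apply Finset.sum_congr rfl
    intro pr _
    have h1 : (x + c • onesV N) pr.1 - (x + c • onesV N) pr.2 = x pr.1 - x pr.2 := by
      simp [PiLp.add_apply, PiLp.smul_apply, onesV, smul_eq_mul]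
    rw [h1]
  unfold phiq
  simp only [hfe]

lemma hasFDerivAt_norm_rpow' {N : ℕ} (p : ℝ) {x : EuclideanSpace ℝ (Fin N)} (hx : x ≠ 0) :
    HasFDerivAt (fun y : EuclideanSpace ℝ (Fin N) => ‖y‖ ^ p)
      ((p * ‖x‖ ^ (p - 2)) • (innerSL ℝ x)) x := by
  have hxn : (0:ℝ) < ‖x‖ := norm_pos_iff.2 hx
  have h2 : HasFDerivAt (fun y : EuclideanSpace ℝ (Fin N) => ‖y‖ ^ 2)
      ((2:ℕ) • (innerSL ℝ x)) x := (hasStrictFDerivAt_norm_sq x).hasFDerivAt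
  have h3 := h2.rpow_const (p := p/2) (Or.inl (by positivity))
  have key : (fun y : EuclideanSpace ℝ (Fin N) => (‖y‖ ^ 2) ^ (p/2)) =
      fun y : EuclideanSpace ℝ (Fin N) => ‖y‖ ^ p := by
    funext y
    rw [← Real.rpow_natCast ‖y‖ 2, ← Real.rpow_mul (norm_nonneg y)]
    norm_num
    rw [show (2:ℝ) * (p/2) = p by ring]
  rw [key] at h3
  refine h3.congr_fderiv ?_
  have h4 : ((‖x‖ ^ 2 : ℝ)) ^ (p/2 - 1) = ‖x‖ ^ (p - 2) := by
    rw [← Real.rpow_natCast ‖x‖ 2, ← Real.rpow_mul (norm_nonneg x)]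
    norm_num
    rw [show (2:ℝ) * (p/2 - 1) = p - 2 by ring]
  ext v
  simp only [ContinuousLinearMap.smul_apply, smul_eq_mul, h4, nsmul_eq_mul,
    Nat.cast_ofNat]
  ring

lemma euler_identity {N : ℕ} (E : Finset (Finset (Fin N))) (w : Finset (Fin N) → ℝ) {p q : ℝ}
    (hp : 1 < p) (hq : 1 < q) (x : EuclideanSpace ℝ (Fin N)) :
    fderiv ℝ (phiq E w p q) x x = p * phiq E w p q x := by
  have hΦ := diffPhi E w hp hq
  have hline : HasDerivAt (fun t : ℝ => t • x) x 1 := by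
    simpa using (hasDerivAt_id (1:ℝ)).smul_const x
  have h1 : HasDerivAt (fun t : ℝ => phiq E w p q (t • x))
      (fderiv ℝ (phiq E w p q) ((1:ℝ) • x) x) 1 :=
    (by have := ((hΦ ((1:ℝ) • x)).hasFDerivAt).comp_hasDerivAt 1 hline; exact this)
  rw [one_smul] at h1
  have h2 : (fun t : ℝ => phiq E w p q (t • x)) =ᶠ[𝓝 1]
      fun t : ℝ => t ^ p * phiq E w p q x := by
    filter_upwards [Ioi_mem_nhds (by norm_num : (0:ℝ) < 1)] with t ht
    exact phiq_smul E w (by linarith) (by linarith) (le_of_lt ht) x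
  have h3 : HasDerivAt (fun t : ℝ => t ^ p * phiq E w p q x) (p * phiq E w p q x) 1 := by
    have := (Real.hasDerivAt_rpow_const (x := (1:ℝ)) (p := p)
      (Or.inl one_ne_zero)).mul_const (phiq E w p q x)
    simpa using this
  have h4 := h3.congr_of_eventuallyEq h2
  exact h1.unique h4

theorem stmt17 (N : ℕ) (hN : 2 ≤ N) (E : Finset (Finset (Fin N))) (hE : ∀ e ∈ E, 2 ≤ e.card)
    (hEne : E.Nonempty)
    (w : Finset (Fin N) → ℝ) (hw : ∀ e ∈ E, 0 < w e)
    (hconn : ∀ i j : Fin N, ∃ k, chained E i j k)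
    (p q : ℝ) (hp : 1 < p) (hq : 1 < q) (lam1q : ℝ)
    (hlam : lam1q = sInf {r : ℝ | ∃ x : EuclideanSpace ℝ (Fin N),
      (∑ i, x i) = 0 ∧ x ≠ 0 ∧ r = p * phiq E w p q x / ‖x‖ ^ p}) :
    (∃ ζ : EuclideanSpace ℝ (Fin N), (∑ i, ζ i) = 0 ∧ ζ ≠ 0 ∧
      p * phiq E w p q ζ / ‖ζ‖ ^ p = lam1q) ∧
    (∀ ζ : EuclideanSpace ℝ (Fin N), (∑ i, ζ i) = 0 → ζ ≠ 0 →
      (p * phiq E w p q ζ / ‖ζ‖ ^ p = lam1q ↔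
        gradient (phiq E w p q) ζ = (lam1q * ‖ζ‖ ^ (p - 2)) • ζ)) := by
  have hp0 : (0:ℝ) < p := by linarith
  have hq0 : (0:ℝ) < q := by linarith
  have hdiff : Differentiable ℝ (phiq E w p q) := diffPhi E w hp hq
  have hΦ0 : ∀ x, 0 ≤ phiq E w p q x := phiq_nonneg hw hp0 q
  have hbdd : BddBelow {r : ℝ | ∃ x : EuclideanSpace ℝ (Fin N),
      (∑ i, x i) = 0 ∧ x ≠ 0 ∧ r = p * phiq E w p q x / ‖x‖ ^ p} := by
    refine ⟨0, ?_⟩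
    rintro r ⟨x, hx0, hxne, rfl⟩
    apply div_nonneg (mul_nonneg hp0.le (hΦ0 x)) (Real.rpow_nonneg (norm_nonneg x) p)
  -- scaling
  have hscale : ∀ x : EuclideanSpace ℝ (Fin N), x ≠ 0 →
      p * phiq E w p q x / ‖x‖ ^ p = p * phiq E w p q (‖x‖⁻¹ • x) := by
    intro x hx
    have hn : (0:ℝ) < ‖x‖ := norm_pos_iff.2 hx
    rw [phiq_smul E w hp0 hq0 (by positivity) x, Real.inv_rpow (norm_nonneg x)]
    have hxp : (0:ℝ) < ‖x‖ ^ p := Real.rpow_pos_of_pos hn p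
    field_simp
  -- compact set K
  have hKsub : {x : EuclideanSpace ℝ (Fin N) | ‖x‖ = 1 ∧ (∑ i, x i) = 0} ⊆
      Metric.closedBall 0 1 := by
    intro x hx
    simp [Metric.mem_closedBall, dist_zero_right, hx.1]
  have hKclosed : IsClosed {x : EuclideanSpace ℝ (Fin N) | ‖x‖ = 1 ∧ (∑ i, x i) = 0} := by
    have h1 : Continuous (fun x : EuclideanSpace ℝ (Fin N) => ∑ i, x i) :=
      continuous_finset_sum Finset.univ fun i _ =>
        (EuclideanSpace.proj i : EuclideanSpace ℝ (Fin N) →L[ℝ] ℝ).continuous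
    rw [Set.setOf_and]
    exact (isClosed_eq continuous_norm continuous_const).inter
      (isClosed_eq h1 continuous_const)
  have hKcomp : IsCompact {x : EuclideanSpace ℝ (Fin N) | ‖x‖ = 1 ∧ (∑ i, x i) = 0} :=
    (isCompact_closedBall (0 : EuclideanSpace ℝ (Fin N)) 1).of_isClosed_subset hKclosed hKsub
  -- nonempty
  have hKne : {x : EuclideanSpace ℝ (Fin N) | ‖x‖ = 1 ∧ (∑ i, x i) = 0}.Nonempty := by
    set i0 : Fin N := ⟨0, by omega⟩ with hi0
    set i1 : Fin N := ⟨1, by omega⟩ with hi1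
    have hne01 : i1 ≠ i0 := by simp [hi0, hi1, Fin.ext_iff]
    set y0 : EuclideanSpace ℝ (Fin N) :=
      EuclideanSpace.single i0 (1:ℝ) - EuclideanSpace.single i1 1 with hy0
    have hy0sum : (∑ i, y0 i) = 0 := by
      simp [hy0, PiLp.sub_apply, EuclideanSpace.single_apply, Finset.sum_sub_distrib]
    have hy0ne : y0 ≠ 0 := by
      intro h
      have h1 : y0 i0 = 0 := by rw [h]; rfl
      rw [hy0] at h1
      simp [PiLp.sub_apply, EuclideanSpace.single_apply, hne01.symm] at h1
    have hn : (0:ℝ) < ‖y0‖ := norm_pos_iff.2 hy0ne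
    refine ⟨‖y0‖⁻¹ • y0, norm_smul_inv_norm hy0ne, ?_⟩
    simp only [PiLp.smul_apply, smul_eq_mul, ← Finset.mul_sum, hy0sum, mul_zero]
  -- minimizer
  obtain ⟨ζ₀, hζ₀K, hminK⟩ := hKcomp.exists_isMinOn hKne (hdiff.continuous.continuousOn)
  have hζ₀n : ‖ζ₀‖ = 1 := hζ₀K.1
  have hζ₀ne : ζ₀ ≠ 0 := by
    intro h; rw [h, norm_zero] at hζ₀n; norm_num at hζ₀n
  have hmin : ∀ y ∈ {x : EuclideanSpace ℝ (Fin N) | ‖x‖ = 1 ∧ (∑ i, x i) = 0},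
      phiq E w p q ζ₀ ≤ phiq E w p q y := fun y hy => hminK hy
  have hSne : {r : ℝ | ∃ x : EuclideanSpace ℝ (Fin N),
      (∑ i, x i) = 0 ∧ x ≠ 0 ∧ r = p * phiq E w p q x / ‖x‖ ^ p}.Nonempty :=
    ⟨_, ζ₀, hζ₀K.2, hζ₀ne, rfl⟩
  have lam_eq : lam1q = p * phiq E w p q ζ₀ := by
    rw [hlam]
    apply le_antisymm
    · apply csInf_le hbdd
      exact ⟨ζ₀, hζ₀K.2, hζ₀ne, by rw [hζ₀n, Real.one_rpow, div_one]⟩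
    · apply le_csInf hSne
      rintro r ⟨x, hx0, hxne, rfl⟩
      rw [hscale x hxne]
      apply mul_le_mul_of_nonneg_left _ hp0.le
      apply hmin
      constructor
      · exact norm_smul_inv_norm hxne
      · simp only [PiLp.smul_apply, smul_eq_mul, ← Finset.mul_sum, hx0, mul_zero]
  have hlow : ∀ x : EuclideanSpace ℝ (Fin N), (∑ i, x i) = 0 →
      lam1q * ‖x‖ ^ p ≤ p * phiq E w p q x := by
    intro x hx0
    rcases eq_or_ne x 0 with rfl | hxne
    · simp only [norm_zero, Real.zero_rpow hp0.ne', mul_zero]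
      exact mul_nonneg hp0.le (hΦ0 0)
    · have h1 : lam1q ≤ p * phiq E w p q x / ‖x‖ ^ p := by
        rw [hlam]
        exact csInf_le hbdd ⟨x, hx0, hxne, rfl⟩
      rw [le_div_iff₀ (Real.rpow_pos_of_pos (norm_pos_iff.2 hxne) p)] at h1
      exact h1
  have hgradinner : ∀ (z u : EuclideanSpace ℝ (Fin N)),
      ⟪gradient (phiq E w p q) z, u⟫ = fderiv ℝ (phiq E w p q) z u := by
    intro z u
    have h : gradient (phiq E w p q) z =
        (InnerProductSpace.toDual ℝ _).symm (fderiv ℝ (phiq E w p q) z) := rfl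
    rw [h, InnerProductSpace.toDual_symm_apply]
  refine ⟨⟨ζ₀, hζ₀K.2, hζ₀ne, by rw [hζ₀n, Real.one_rpow, div_one]; exact lam_eq.symm⟩, ?_⟩
  intro ζ hsum hne
  have hnz : (0:ℝ) < ‖ζ‖ := norm_pos_iff.2 hne
  have hrpos : (0:ℝ) < ‖ζ‖ ^ p := Real.rpow_pos_of_pos hnz p
  constructor
  · intro hmineq
    have hval : p * phiq E w p q ζ = lam1q * ‖ζ‖ ^ p := by
      rw [div_eq_iff hrpos.ne'] at hmineq
      linarith
    have claimV : ∀ v : EuclideanSpace ℝ (Fin N), (∑ i, v i) = 0 →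
        fderiv ℝ (phiq E w p q) ζ v = lam1q * ‖ζ‖ ^ (p-2) * ⟪ζ, v⟫ := by
      intro v hv
      have hline : HasDerivAt (fun t : ℝ => ζ + t • v) v 0 := by
        simpa using ((hasDerivAt_id (0:ℝ)).smul_const v).const_add ζ
      have hA : HasDerivAt (fun t : ℝ => phiq E w p q (ζ + t • v))
          (fderiv ℝ (phiq E w p q) ζ v) 0 := by
        have hF : HasFDerivAt (phiq E w p q) (fderiv ℝ (phiq E w p q) ζ)
            (ζ + (0:ℝ) • v) := by simpa using (hdiff ζ).hasFDerivAt
        exact hF.comp_hasDerivAt 0 hline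
      have hB : HasDerivAt (fun t : ℝ => ‖ζ + t • v‖ ^ p)
          (p * ‖ζ‖ ^ (p-2) * ⟪ζ, v⟫) 0 := by
        have hF : HasFDerivAt (fun y : EuclideanSpace ℝ (Fin N) => ‖y‖ ^ p)
            ((p * ‖ζ‖ ^ (p - 2)) • (innerSL ℝ ζ)) (ζ + (0:ℝ) • v) := by
          simpa using hasFDerivAt_norm_rpow' p hne
        have h1 := hF.comp_hasDerivAt 0 hline
        simpa [mul_assoc, Function.comp_def] using h1
      have hψd : HasDerivAt (fun t : ℝ => p * phiq E w p q (ζ + t • v)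
          - lam1q * ‖ζ + t • v‖ ^ p)
          (p * fderiv ℝ (phiq E w p q) ζ v - lam1q * (p * ‖ζ‖ ^ (p-2) * ⟪ζ, v⟫)) 0 :=
        (hA.const_mul p).sub (hB.const_mul lam1q)
      have hlocal : IsLocalMin (fun t : ℝ => p * phiq E w p q (ζ + t • v)
          - lam1q * ‖ζ + t • v‖ ^ p) 0 := by
        apply Filter.Eventually.of_forall
        intro t
        have h1 : lam1q * ‖ζ + t • v‖ ^ p ≤ p * phiq E w p q (ζ + t • v) := by
          apply hlow
          simp only [PiLp.add_apply, PiLp.smul_apply, smul_eq_mul, Finset.sum_add_distrib,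
            ← Finset.mul_sum, hsum, hv, mul_zero, add_zero]
        simp only [zero_smul, add_zero]
        linarith
      have hzero := hlocal.hasDerivAt_eq_zero hψd
      apply mul_left_cancel₀ hp0.ne'
      have h3 : lam1q * (p * ‖ζ‖ ^ (p-2) * ⟪ζ, v⟫)
          = p * (lam1q * ‖ζ‖ ^ (p-2) * ⟪ζ, v⟫) := by ring
      linarith [hzero]
    have hones : fderiv ℝ (phiq E w p q) ζ (onesV N) = 0 := by
      have hline : HasDerivAt (fun t : ℝ => ζ + t • onesV N) (onesV N) 0 := by
        simpa using ((hasDerivAt_id (0:ℝ)).smul_const (onesV N)).const_add ζ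
      have hA : HasDerivAt (fun t : ℝ => phiq E w p q (ζ + t • onesV N))
          (fderiv ℝ (phiq E w p q) ζ (onesV N)) 0 := by
        have hF : HasFDerivAt (phiq E w p q) (fderiv ℝ (phiq E w p q) ζ)
            (ζ + (0:ℝ) • onesV N) := by simpa using (hdiff ζ).hasFDerivAt
        exact hF.comp_hasDerivAt 0 hline
      have hconst : (fun t : ℝ => phiq E w p q (ζ + t • onesV N))
          = fun _ : ℝ => phiq E w p q ζ := funext fun t => phiq_translate E w p q ζ t
      rw [hconst] at hA
      exact hA.unique (hasDerivAt_const 0 _)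
    have hinner1 : ⟪ζ, onesV N⟫ = 0 := by
      simp only [PiLp.inner_apply, onesV, PiLp.toLp_apply, RCLike.inner_apply, conj_trivial, mul_one, one_mul]
      exact hsum
    have hall : ∀ u : EuclideanSpace ℝ (Fin N),
        fderiv ℝ (phiq E w p q) ζ u = lam1q * ‖ζ‖ ^ (p-2) * ⟪ζ, u⟫ := by
      intro u
      set c : ℝ := (∑ i, u i) / N with hc
      have hNne : (N:ℝ) ≠ 0 := by positivity
      have hv : (∑ i, (u - c • onesV N) i) = 0 := by
        simp only [PiLp.sub_apply, PiLp.smul_apply, onesV, PiLp.toLp_apply, smul_eq_mul, mul_one,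
          Finset.sum_sub_distrib, Finset.sum_const, Finset.card_univ, Fintype.card_fin,
          nsmul_eq_mul]
        rw [hc]
        field_simp
        ring
      have hDu := claimV _ hv
      have hlin : fderiv ℝ (phiq E w p q) ζ u
          = fderiv ℝ (phiq E w p q) ζ (u - c • onesV N)
            + c * fderiv ℝ (phiq E w p q) ζ (onesV N) := by
        rw [map_sub, ContinuousLinearMap.map_smul]
        simp only [smul_eq_mul]
        ring
      have hip : ⟪ζ, u - c • onesV N⟫ = ⟪ζ, u⟫ := by
        rw [inner_sub_right, real_inner_smul_right, hinner1]
        ring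
      rw [hlin, hones, hDu, hip]
      ring
    apply ext_inner_right ℝ
    intro u
    rw [hgradinner, hall u, real_inner_smul_left]
  · intro hgrad
    have hDζ : fderiv ℝ (phiq E w p q) ζ ζ = p * phiq E w p q ζ := euler_identity E w hp hq ζ
    have h1 := hgradinner ζ ζ
    rw [hgrad, hDζ, real_inner_smul_left, real_inner_self_eq_norm_sq] at h1
    have h2 : ‖ζ‖ ^ (p-2) * (‖ζ‖ ^ (2:ℕ)) = ‖ζ‖ ^ p := by
      rw [← Real.rpow_natCast ‖ζ‖ 2, ← Real.rpow_add hnz]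
      norm_num
    have h3 : lam1q * ‖ζ‖ ^ p = p * phiq E w p q ζ := by
      rw [← h2]
      calc lam1q * (‖ζ‖ ^ (p-2) * ‖ζ‖ ^ (2:ℕ))
          = lam1q * ‖ζ‖ ^ (p-2) * ‖ζ‖ ^ (2:ℕ) := by ring
        _ = p * phiq E w p q ζ := h1
    rw [← h3]
    field_simp
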